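/- (1) For every m ≥ 0, B_m occurs exactly once in the word A_m B_m, namely at position 2^m + 1. (2) For every m ≥ 1, B_m occurs exactly three times in the word B_m A_m B_m, namely at positions 1, 2^{m−1} + 1 and 2^{m+1} + 1. (3) For every m ≥ 1, B_m occurs exactly three times in the word B_m A_m A_m A_m B_m, namely at positions 1, 2^{m−1} + 1 and 2^{m+2} + 1. -/

import Mathlib

/-- The alphabet: letters a, b (for the period-doubling sequence) and c (used by Θ₂). -/
inductive Letter : Type
  | a | b | c
deriving DecidableEq, Repr

open Letter

/-- The period-doubling substitution σ : a ↦ ab, b ↦ aa, extended to words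
(the extra letter c is left untouched; it is never produced). -/
def sigmaw : List Letter → List Letter :=
  fun w => w.flatMap fun x => match x with
    | .a => [.a, .b]
    | .b => [.a, .a]
    | .c => [.c]

/-- A_m = σ^m(a). -/
def A (m : ℕ) : List Letter := sigmaw^[m] [.a]

/-- B_m = σ^m(b). -/
def B (m : ℕ) : List Letter := sigmaw^[m] [.b]

/-- δ_m, the last letter of A_m. -/
def delta (m : ℕ) : Letter := (A m).getLastD .a

/-- The period-doubling sequence D, as a function giving its (n+1)-st letter
(0-indexed); it is the fixed point of σ beginning with a, and A_{n+1} is a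
prefix of it of length 2^{n+1} > n. -/
def D (n : ℕ) : Letter := (A (n + 1)).getD n .a

/-- The finite segment D[i .. i+len−1] of the period-doubling sequence,
with 1-based starting position i. -/
def Dseg (i len : ℕ) : List Letter := (List.range len).map fun k => D (i - 1 + k)

/-- u occurs in the finite word w at (1-based) position i. -/
def OccursAt {α : Type*} (u w : List α) (i : ℕ) : Prop :=
  1 ≤ i ∧ i - 1 + u.length ≤ w.length ∧ (w.drop (i - 1)).take u.length = u

/-- u is a factor of the finite word w. -/
def IsFactor {α : Type*} (u w : List α) : Prop := ∃ i, OccursAt u w i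

/-- u occurs in the period-doubling sequence D at (1-based) position i. -/
def DOccursAt (u : List Letter) (i : ℕ) : Prop := 1 ≤ i ∧ Dseg i u.length = u

/-- u is a factor of the period-doubling sequence D. -/
def FactorD (u : List Letter) : Prop := ∃ i, DOccursAt u i

/-- L(u,p): the starting position of the p-th occurrence (p ≥ 1) of u in D. -/
noncomputable def L (u : List Letter) (p : ℕ) : ℕ := Nat.nth (DOccursAt u) (p - 1)

/-- r_p(u): the p-th return word of u (p ≥ 1), i.e. D[L(u,p) .. L(u,p+1)−1];
r_0(u) is the prefix of D preceding the first occurrence of u. -/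
noncomputable def r (u : List Letter) (p : ℕ) : List Letter :=
  if p = 0 then Dseg 1 (L u 1 - 1) else Dseg (L u p) (L u (p + 1) - L u p)

/-- The morphism τ₁ : a ↦ a, b ↦ bb, extended to words. -/
def tau1 : List Letter → List Letter :=
  fun w => w.flatMap fun x => match x with
    | .a => [.a]
    | .b => [.b, .b]
    | .c => [.c]

/-- The morphism τ₂ : a ↦ ab, b ↦ acac, extended to words. -/
def tau2 : List Letter → List Letter :=
  fun w => w.flatMap fun x => match x with
    | .a => [.a, .b]
    | .b => [.a, .c, .a, .c]
    | .c => [.c]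

/-- Θ₁[p], the p-th letter (p ≥ 1) of Θ₁ = τ₁(D): since |τ₁(w)| ≥ |w|, the p-th
letter of Θ₁ is the p-th letter of the image of the length-p prefix of D. -/
def Theta1 (p : ℕ) : Letter := (tau1 (Dseg 1 p)).getD (p - 1) .a

/-- Θ₂[p], the p-th letter (p ≥ 1) of Θ₂ = τ₂(D). -/
def Theta2 (p : ℕ) : Letter := (tau2 (Dseg 1 p)).getD (p - 1) .a

/-- The envelope word E_{1,m} = A_m with its last letter δ_m deleted. -/
def E1 (m : ℕ) : List Letter := (A m).dropLast

/-- The envelope word E_{2,m} = B_m B_{m−1} with its last letter δ_m deleted. -/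
def E2 (m : ℕ) : List Letter := (B m ++ B (m - 1)).dropLast

/-- Enumeration of the envelope words in the order
E_{1,1} ⊏ E_{2,1} ⊏ E_{1,2} ⊏ E_{2,2} ⊏ …. -/
def Eword (k : ℕ) : List Letter := if k % 2 = 0 then E1 (k / 2 + 1) else E2 (k / 2 + 1)

/-- Env(u): the ⊏-least envelope word having u as a factor. -/
noncomputable def Env (u : List Letter) : List Letter :=
  Eword (sInf {k | IsFactor u (Eword k)})

/-- The letterwise complement exchanging a and b. -/
def comp : Letter → Letter
  | .a => .b
  | .b => .a
  | .c => .c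
/-!
On words over `{a, b}` the substitution σ doubles lengths, is injective, and sends each letter
`x` to `a x̄`. So if `a ∈ u`, an occurrence of `σ u` in `σ w` cannot start at an even position
(the `b` following an `a` of `σ u` would fall on an odd position of `σ w`, all of which carry
`a`), and at an odd position `2j + 1` it is exactly the image of an occurrence of `u` at `j + 1`.
Iterating, the occurrences of `B (n + 1) = σⁿ(aa)` in `σⁿ(w)` are those of `aa` in `w`, with
positions rescaled by `i ↦ 2ⁿ(i - 1) + 1`; the three words are the images under σⁿ of
`abaa`, `aaabaa` and `aaabababaa`, where the occurrences are read off directly.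
-/

theorem sigmaw_append (u v : List Letter) : sigmaw (u ++ v) = sigmaw u ++ sigmaw v :=
  List.flatMap_append

section LetterWords

variable {u w : List Letter}

theorem length_sigmaw (hw : c ∉ w) : (sigmaw w).length = 2 * w.length := by
  induction w with
  | nil => rfl
  | cons x w ih =>
    simp only [List.mem_cons, not_or] at hw
    cases x <;> simp_all [sigmaw] <;> omega

theorem drop_sigmaw (hw : c ∉ w) (j : ℕ) : (sigmaw w).drop (2 * j) = sigmaw (w.drop j) := by
  induction w generalizing j with
  | nil => simp [sigmaw]
  | cons x w ih =>
    simp only [List.mem_cons, not_or] at hw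
    cases j with
    | zero => simp
    | succ j => cases x <;> simp_all [sigmaw, Nat.mul_succ]

theorem take_sigmaw (hw : c ∉ w) (j : ℕ) : (sigmaw w).take (2 * j) = sigmaw (w.take j) := by
  induction w generalizing j with
  | nil => simp [sigmaw]
  | cons x w ih =>
    simp only [List.mem_cons, not_or] at hw
    cases j with
    | zero => simp [sigmaw]
    | succ j => cases x <;> simp_all [sigmaw, Nat.mul_succ]

theorem getElem?_sigmaw_two_mul (hw : c ∉ w) (t : ℕ) :
    (sigmaw w)[2 * t]? = w[t]?.map fun _ => a := by
  induction w generalizing t with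
  | nil => simp [sigmaw]
  | cons x w ih =>
    simp only [List.mem_cons, not_or] at hw
    cases t with
    | zero => cases x <;> simp_all [sigmaw]
    | succ t => cases x <;> simp_all [sigmaw, Nat.mul_succ]

theorem getElem?_sigmaw_two_mul_add_one (hw : c ∉ w) (t : ℕ) :
    (sigmaw w)[2 * t + 1]? = w[t]?.map comp := by
  induction w generalizing t with
  | nil => simp [sigmaw]
  | cons x w ih =>
    simp only [List.mem_cons, not_or] at hw
    cases t with
    | zero => cases x <;> simp_all [sigmaw, comp]
    | succ t => cases x <;> simp_all [sigmaw, Nat.mul_succ]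

theorem comp_involutive : Function.Involutive comp := by
  intro x; cases x <;> rfl

theorem sigmaw_injOn : Set.InjOn sigmaw {w | c ∉ w} := fun u hu v hv h =>
  List.ext_getElem? fun t => Option.map_injective comp_involutive.injective <| by
    rw [← getElem?_sigmaw_two_mul_add_one hu, ← getElem?_sigmaw_two_mul_add_one hv, h]

theorem c_notMem_sigmaw (hw : c ∉ w) : c ∉ sigmaw w := by
  simp only [sigmaw, List.mem_flatMap, not_exists, not_and]
  intro x hx
  cases x <;> simp_all

theorem a_mem_sigmaw (hw : a ∈ w) : a ∈ sigmaw w :=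
  List.mem_flatMap.2 ⟨a, hw, by simp⟩

theorem occursAt_sigmaw_two_mul_add_one (hu : c ∉ u) (hw : c ∉ w) (j : ℕ) :
    OccursAt (sigmaw u) (sigmaw w) (2 * j + 1) ↔ OccursAt u w (j + 1) := by
  have hwj : c ∉ w.drop j := mt List.mem_of_mem_drop hw
  simp only [OccursAt, Nat.add_sub_cancel, length_sigmaw hu, length_sigmaw hw, drop_sigmaw hw,
    take_sigmaw hwj, le_add_iff_nonneg_left, zero_le, true_and]
  exact and_congr (by omega) ⟨sigmaw_injOn (mt List.mem_of_mem_take hwj) hu, congrArg sigmaw⟩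

theorem not_occursAt_sigmaw_two_mul_add_two (hu : c ∉ u) (hw : c ∉ w) (ha : a ∈ u) (j : ℕ) :
    ¬ OccursAt (sigmaw u) (sigmaw w) (2 * j + 2) := by
  rintro ⟨-, -, h⟩
  obtain ⟨t, ht, hta⟩ := List.getElem_of_mem ha
  have hlt : 2 * t + 1 < (sigmaw u).length := by rw [length_sigmaw hu]; omega
  have key := congrArg (·[2 * t + 1]?) h
  simp only [List.getElem?_take, hlt, if_true, List.getElem?_drop] at key
  rw [show 2 * j + 2 - 1 + (2 * t + 1) = 2 * (j + t + 1) by omega, getElem?_sigmaw_two_mul hw,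
    getElem?_sigmaw_two_mul_add_one hu, List.getElem?_eq_getElem ht, hta] at key
  cases w[j + t + 1]? <;> simp [comp] at key

theorem occursAt_sigmaw_iff (hu : c ∉ u) (hw : c ∉ w) (ha : a ∈ u) (i : ℕ) :
    OccursAt (sigmaw u) (sigmaw w) i ↔ ∃ j, OccursAt u w j ∧ i = 2 * (j - 1) + 1 := by
  constructor
  · intro h
    obtain ⟨k, rfl⟩ := Nat.exists_eq_add_of_le' h.1
    obtain ⟨j, rfl | rfl⟩ := Nat.even_or_odd' k
    · exact ⟨j + 1, (occursAt_sigmaw_two_mul_add_one hu hw j).1 h, by omega⟩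
    · exact absurd h (not_occursAt_sigmaw_two_mul_add_two hu hw ha j)
  · rintro ⟨j, hj, rfl⟩
    obtain ⟨j, rfl⟩ := Nat.exists_eq_add_of_le' hj.1
    simpa using (occursAt_sigmaw_two_mul_add_one hu hw j).2 hj

theorem occursAt_iterate_sigmaw_iff (hu : c ∉ u) (hw : c ∉ w) (ha : a ∈ u) (n i : ℕ) :
    OccursAt (sigmaw^[n] u) (sigmaw^[n] w) i ↔ ∃ j, OccursAt u w j ∧ i = 2 ^ n * (j - 1) + 1 := by
  induction n generalizing u w i with
  | zero =>
    refine ⟨fun h => ⟨i, h, by have := h.1; omega⟩, ?_⟩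
    rintro ⟨j, hj, rfl⟩
    rwa [pow_zero, one_mul, Nat.sub_add_cancel hj.1]
  | succ n ih =>
    simp only [Function.iterate_succ_apply,
      ih (c_notMem_sigmaw hu) (c_notMem_sigmaw hw) (a_mem_sigmaw ha),
      occursAt_sigmaw_iff hu hw ha]
    constructor
    · rintro ⟨_, ⟨j, hj, rfl⟩, rfl⟩
      exact ⟨j, hj, by simp [pow_succ]; ring⟩
    · rintro ⟨j, hj, rfl⟩
      exact ⟨_, ⟨j, hj, rfl⟩, by simp [pow_succ]; ring⟩

end LetterWords

theorem iterate_sigmaw_append (n : ℕ) (u v : List Letter) :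
    sigmaw^[n] (u ++ v) = sigmaw^[n] u ++ sigmaw^[n] v :=
  Function.Semiconj₂.iterate (f := sigmaw) (op := (· ++ ·)) sigmaw_append n u v

theorem A_succ_eq_iterate (n : ℕ) : A (n + 1) = sigmaw^[n] [a, b] :=
  Function.iterate_succ_apply _ _ _

theorem B_succ_eq_iterate (n : ℕ) : B (n + 1) = sigmaw^[n] [a, a] :=
  Function.iterate_succ_apply _ _ _

instance {α : Type*} [DecidableEq α] (u w : List α) (i : ℕ) : Decidable (OccursAt u w i) := by
  unfold OccursAt; infer_instance

theorem OccursAt.le_length_add_one {α : Type*} {u w : List α} {i : ℕ} (h : OccursAt u w i) :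
    i ≤ w.length + 1 := by
  have := h.2.1; omega

theorem occursAt_iff_of_forall_le {α : Type*} {u w : List α} {P : ℕ → Prop}
    (hP : ∀ i, P i → i ≤ w.length + 1) (h : ∀ i ≤ w.length + 1, OccursAt u w i ↔ P i) (i : ℕ) :
    OccursAt u w i ↔ P i :=
  if hi : i ≤ w.length + 1 then h i hi
  else iff_of_false (fun ho => hi ho.le_length_add_one) (fun hp => hi (hP i hp))

/-- (1) For every m ≥ 0, B_m occurs exactly once in A_m B_m, at position
2^m + 1. (2) For every m ≥ 1, B_m occurs exactly three times in B_m A_m B_m, at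
positions 1, 2^{m−1} + 1 and 2^{m+1} + 1. (3) For every m ≥ 1, B_m occurs exactly
three times in B_m A_m A_m A_m B_m, at positions 1, 2^{m−1} + 1 and 2^{m+2} + 1. -/
theorem Bm_occurrences :
    (∀ m : ℕ, ∀ i, OccursAt (B m) (A m ++ B m) i ↔ i = 2 ^ m + 1) ∧
    (∀ m : ℕ, 1 ≤ m → ∀ i, OccursAt (B m) (B m ++ A m ++ B m) i ↔
      i = 1 ∨ i = 2 ^ (m - 1) + 1 ∨ i = 2 ^ (m + 1) + 1) ∧
    (∀ m : ℕ, 1 ≤ m → ∀ i, OccursAt (B m) (B m ++ A m ++ A m ++ A m ++ B m) i ↔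
      i = 1 ∨ i = 2 ^ (m - 1) + 1 ∨ i = 2 ^ (m + 2) + 1) := by
  have base₀ : ∀ i, OccursAt [b] ([a] ++ [b]) i ↔ i = 2 :=
    occursAt_iff_of_forall_le (by simp) (by decide)
  have base₁ : ∀ i, OccursAt [a, a] ([a, b] ++ [a, a]) i ↔ i = 3 :=
    occursAt_iff_of_forall_le (by simp) (by decide)
  have base₂ : ∀ i, OccursAt [a, a] ([a, a] ++ [a, b] ++ [a, a]) i ↔ i = 1 ∨ i = 2 ∨ i = 5 :=
    occursAt_iff_of_forall_le (by simp) (by decide)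
  have base₃ : ∀ i, OccursAt [a, a] ([a, a] ++ [a, b] ++ [a, b] ++ [a, b] ++ [a, a]) i ↔
      i = 1 ∨ i = 2 ∨ i = 9 :=
    occursAt_iff_of_forall_le (by simp) (by decide)
  refine ⟨fun m i => ?_, fun m hm i => ?_, fun m hm i => ?_⟩
  · cases m with
    | zero => exact base₀ i
    | succ n =>
      simp only [A_succ_eq_iterate, B_succ_eq_iterate, ← iterate_sigmaw_append]
      rw [occursAt_iterate_sigmaw_iff (by decide) (by decide) (by decide)]
      simp only [base₁, exists_eq_left]
      ring_nf
  · obtain ⟨n, rfl⟩ := Nat.exists_eq_add_of_le' hm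
    simp only [A_succ_eq_iterate, B_succ_eq_iterate, ← iterate_sigmaw_append]
    rw [occursAt_iterate_sigmaw_iff (by decide) (by decide) (by decide)]
    simp only [base₂, or_and_right, exists_or, exists_eq_left, Nat.add_sub_cancel]
    ring_nf
  · obtain ⟨n, rfl⟩ := Nat.exists_eq_add_of_le' hm
    simp only [A_succ_eq_iterate, B_succ_eq_iterate, ← iterate_sigmaw_append]
    rw [occursAt_iterate_sigmaw_iff (by decide) (by decide) (by decide)]
    simp only [base₃, or_and_right, exists_or, exists_eq_left, Nat.add_sub_cancel]
    ring_nf
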